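/- Let K : ℝ → ℝ be a bounded, symmetric kernel with compact support satisfying ∫ K = 1, ∫ z K(z) dz = 0, ∫ z² K(z) dz = c_K ≠ 0, ∫ z³ K(z) dz = 0. Define the jackknife kernel K*(z) := 2 K(z) - (1/√2) K(z/√2). Then ∫ K* = 1, ∫ z K*(z) dz = 0, ∫ z² K*(z) dz = 0, and ∫ z³ K*(z) dz = 0. Consequently, for g four times continuously differentiable near x, the jackknife estimate satisfies (1/hₙ) ∫ g(y) K*((x-y)/hₙ) dy - g(x) = O(hₙ⁴) as hₙ → 0. -/

import Mathlib

/-!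
Write `K_c z = c⁻¹ K (z / c)`, so that `K* = 2 K - K_√2`. The `k`-th moment of `K_c` is `c ^ k`
times that of `K`, hence the `k`-th moment of `K*` is `(2 - √2 ^ k)` times that of `K`: this kills
the second moment, while the moments of order 0, 1, 3 are inherited from `K`.
For the bias, substitute `y = x - h z`; since `K*` has total mass one and vanishing moments of
orders 1 to 3, the cubic Taylor polynomial of `g` at `x` integrates against `K*` to exactly `g x`,
and the Lagrange remainder is at most `sup |g⁗| h⁴ z⁴ / 4!`, which `K*` integrates because it is
bounded with compact support.
-/

open MeasureTheory Filter

open Nat in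
theorem abs_sub_taylor_le {f : ℝ → ℝ} {n : ℕ} (hf : ContDiff ℝ (n + 1) f) {M : ℝ}
    (hM : ∀ y, |iteratedDeriv (n + 1) f y| ≤ M) (x₀ x : ℝ) :
    |f x - ∑ k ∈ Finset.range (n + 1), (k ! : ℝ)⁻¹ * (x - x₀) ^ k * iteratedDeriv k f x₀|
      ≤ M * |x - x₀| ^ (n + 1) / (n + 1)! := by
  rcases eq_or_ne x₀ x with rfl | hne
  · simp [Finset.sum_range_succ']
  obtain ⟨y, -, hy⟩ := taylor_mean_remainder_lagrange_iteratedDeriv hne hf.contDiffOn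
  have hsum : taylorWithinEval f n (Set.uIcc x₀ x) x₀ x
      = ∑ k ∈ Finset.range (n + 1), (k ! : ℝ)⁻¹ * (x - x₀) ^ k * iteratedDeriv k f x₀ := by
    rw [taylor_within_apply]
    refine Finset.sum_congr rfl fun k hk => ?_
    rw [smul_eq_mul, iteratedDerivWithin_eq_iteratedDeriv (uniqueDiffOn_uIcc hne)
      (hf.contDiffAt.of_le (by exact_mod_cast (Finset.mem_range.mp hk).le)) Set.left_mem_uIcc]
  rw [← hsum, hy, abs_div, abs_mul, abs_pow, Nat.abs_cast]
  gcongr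
  exact hM y

def IntegrableAgainstContinuous (K : ℝ → ℝ) : Prop :=
  ∀ f : ℝ → ℝ, Continuous f → Integrable (fun z => f z * K z)

theorem integrableAgainstContinuous_of_bounded {K : ℝ → ℝ} (hK : Measurable K) {M a b : ℝ}
    (hM : ∀ z, |K z| ≤ M) (hsupp : ∀ z ∉ Set.Icc a b, K z = 0) :
    IntegrableAgainstContinuous K := by
  intro f hf
  have hKi : IntegrableOn K (Set.Icc a b) :=
    Measure.integrableOn_of_bounded measure_Icc_lt_top.ne hK.aestronglyMeasurable
      (ae_of_all _ hM)
  exact (hKi.continuousOn_mul hf.continuousOn isCompact_Icc).integrable_of_forall_notMem_eq_zero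
    fun z hz => by simp [hsupp z hz]

namespace IntegrableAgainstContinuous

theorem comp_div {K : ℝ → ℝ} (hK : IntegrableAgainstContinuous K) {c : ℝ} (hc : c ≠ 0) :
    IntegrableAgainstContinuous fun z => K (z / c) := by
  intro f hf
  have := (hK (fun w => f (c * w)) (by fun_prop)).comp_div hc
  simpa only [mul_div_cancel₀ _ hc] using this

theorem sub {K L : ℝ → ℝ} (hK : IntegrableAgainstContinuous K)
    (hL : IntegrableAgainstContinuous L) : IntegrableAgainstContinuous (K - L) := by
  intro f hf
  simp only [Pi.sub_apply, mul_sub]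
  exact (hK f hf).sub (hL f hf)

theorem const_mul {K : ℝ → ℝ} (hK : IntegrableAgainstContinuous K) (a : ℝ) :
    IntegrableAgainstContinuous fun z => a * K z := by
  intro f hf
  simpa only [mul_left_comm] using (hK f hf).const_mul a

theorem integrable_pow_mul {K : ℝ → ℝ} (hK : IntegrableAgainstContinuous K) (k : ℕ) :
    Integrable fun z => z ^ k * K z :=
  hK _ (continuous_pow k)

end IntegrableAgainstContinuous

theorem integral_pow_mul_comp_div (K : ℝ → ℝ) (k : ℕ) {c : ℝ} (hc : 0 < c) :
    ∫ z, z ^ k * K (z / c) = c ^ (k + 1) * ∫ z, z ^ k * K z := by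
  have h : ∀ z, z ^ k * K (z / c) = c ^ k * ((z / c) ^ k * K (z / c)) := fun z => by
    rw [div_pow]
    field_simp
  simp_rw [h]
  rw [integral_const_mul, Measure.integral_comp_div (fun w => w ^ k * K w), smul_eq_mul,
    abs_of_pos hc]
  ring

noncomputable def jackknifeKernel (K : ℝ → ℝ) (z : ℝ) : ℝ :=
  2 * K z - (1 / Real.sqrt 2) * K (z / Real.sqrt 2)

theorem IntegrableAgainstContinuous.jackknifeKernel {K : ℝ → ℝ}
    (hK : IntegrableAgainstContinuous K) : IntegrableAgainstContinuous (jackknifeKernel K) :=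
  (hK.const_mul 2).sub ((hK.comp_div (by positivity)).const_mul _)

theorem integral_pow_mul_jackknifeKernel {K : ℝ → ℝ} (hK : IntegrableAgainstContinuous K)
    (k : ℕ) :
    ∫ z, z ^ k * jackknifeKernel K z = (2 - Real.sqrt 2 ^ k) * ∫ z, z ^ k * K z := by
  have hs : (0 : ℝ) < Real.sqrt 2 := by positivity
  simp only [jackknifeKernel, mul_sub, mul_left_comm _ (2 : ℝ), mul_left_comm _ (1 / Real.sqrt 2)]
  rw [integral_sub ((hK.integrable_pow_mul k).const_mul 2)
      (((hK.comp_div hs.ne').integrable_pow_mul k).const_mul _),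
    integral_const_mul, integral_const_mul, integral_pow_mul_comp_div K k hs, pow_succ]
  field_simp

theorem integral_poly_mul_eq_of_moments {L : ℝ → ℝ} (hL : IntegrableAgainstContinuous L) {n : ℕ}
    (hL0 : ∫ z, L z = 1) (hLk : ∀ k ∈ Finset.Icc 1 n, ∫ z, z ^ k * L z = 0) (a : ℕ → ℝ) :
    ∫ z, (∑ k ∈ Finset.range (n + 1), a k * z ^ k) * L z = a 0 := by
  simp only [Finset.sum_mul, mul_assoc]
  rw [integral_finsetSum _ fun k _ => (hL.integrable_pow_mul k).const_mul (a k)]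
  simp only [integral_const_mul]
  rw [Finset.sum_range_succ']
  have hvanish : ∀ k ∈ Finset.range n, a (k + 1) * ∫ z, z ^ (k + 1) * L z = 0 := fun k hk => by
    rw [hLk (k + 1) (Finset.mem_Icc.mpr ⟨by omega, Finset.mem_range.mp hk⟩), mul_zero]
  simp [Finset.sum_eq_zero hvanish, hL0]

open Nat in
theorem abs_integral_comp_sub_mul_sub_le {L g : ℝ → ℝ} (hL : IntegrableAgainstContinuous L)
    {n : ℕ} (hL0 : ∫ z, L z = 1) (hLk : ∀ k ∈ Finset.Icc 1 n, ∫ z, z ^ k * L z = 0)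
    (hg : ContDiff ℝ (n + 1) g) {M : ℝ} (hM : ∀ y, |iteratedDeriv (n + 1) g y| ≤ M) (x t : ℝ) :
    |(∫ z, g (x - t * z) * L z) - g x|
      ≤ M * |t| ^ (n + 1) / (n + 1)! * ∫ z, |z ^ (n + 1) * L z| := by
  set P : ℝ → ℝ := fun z =>
    ∑ k ∈ Finset.range (n + 1), (k ! : ℝ)⁻¹ * (-t) ^ k * iteratedDeriv k g x * z ^ k
  have hPL : ∫ z, P z * L z = g x := by
    refine (integral_poly_mul_eq_of_moments hL hL0 hLk
      fun k => (k ! : ℝ)⁻¹ * (-t) ^ k * iteratedDeriv k g x).trans ?_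
    simp
  have hremainder : ∀ z, |g (x - t * z) - P z| ≤ M * |t| ^ (n + 1) / (n + 1)! * |z| ^ (n + 1) := by
    intro z
    have hT := abs_sub_taylor_le hg hM x (x - t * z)
    rw [show x - t * z - x = -t * z by ring, abs_mul, abs_neg, mul_pow] at hT
    convert hT using 3
    · exact Finset.sum_congr rfl fun k _ => by ring
    · ring
  calc |(∫ z, g (x - t * z) * L z) - g x|
      = |∫ z, (g (x - t * z) - P z) * L z| := by
        simp only [sub_mul]
        rw [integral_sub (hL _ (by fun_prop)) (hL _ (by fun_prop)), hPL]
    _ ≤ ∫ z, M * |t| ^ (n + 1) / (n + 1)! * |z ^ (n + 1) * L z| := by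
        rw [← Real.norm_eq_abs]
        refine norm_integral_le_of_norm_le ((hL.integrable_pow_mul _).abs.const_mul _)
          (ae_of_all _ fun z => ?_)
        rw [Real.norm_eq_abs, abs_mul, abs_mul, abs_pow, ← mul_assoc]
        exact mul_le_mul_of_nonneg_right (hremainder z) (abs_nonneg _)
    _ = M * |t| ^ (n + 1) / (n + 1)! * ∫ z, |z ^ (n + 1) * L z| := integral_const_mul _ _

theorem integral_mul_comp_sub_div (g L : ℝ → ℝ) (x : ℝ) {t : ℝ} (ht : 0 < t) :
    (1 / t) * ∫ y, g y * L ((x - y) / t) = ∫ z, g (x - t * z) * L z := by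
  have hshift := integral_sub_left_eq_self (fun y => g (x - y) * L (y / t)) (μ := volume) x
  simp only [sub_sub_cancel] at hshift
  have hscale := Measure.integral_comp_div (fun z => g (x - t * z) * L z) t
  simp only [mul_div_cancel₀ _ ht.ne', smul_eq_mul, abs_of_pos ht] at hscale
  rw [hshift, hscale]
  field_simp

theorem stmt_3_general (K g : ℝ → ℝ) (A : ℝ)
    (hKmeas : Measurable K) (hKbd : ∃ M, ∀ z, |K z| ≤ M)
    (hKsupp : ∀ z, z ∉ Set.Icc (-A) A → K z = 0)
    (hKint : ∫ z, K z = 1)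
    (hK1 : ∫ z, z * K z = 0)
    (hK3 : ∫ z, z^3 * K z = 0)
    (Kstar : ℝ → ℝ)
    (hKstar : ∀ z, Kstar z = 2 * K z - (1 / Real.sqrt 2) * K (z / Real.sqrt 2))
    (hg : ContDiff ℝ 4 g)
    (hgbd : ∃ M, ∀ k ≤ 4, ∀ y, |iteratedDeriv k g y| ≤ M)
    (x : ℝ) (h : ℕ → ℝ) (hpos : ∀ n, 0 < h n) :
    (∫ z, Kstar z = 1) ∧ (∫ z, z * Kstar z = 0) ∧
    (∫ z, z^2 * Kstar z = 0) ∧ (∫ z, z^3 * Kstar z = 0) ∧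
    ∃ C, ∀ᶠ n in atTop,
      |(1 / h n) * (∫ y, g y * Kstar ((x - y) / h n)) - g x| ≤ C * (h n)^4 := by
  obtain ⟨M, hM⟩ := hKbd
  obtain ⟨Mg, hMg⟩ := hgbd
  have hK : IntegrableAgainstContinuous K :=
    integrableAgainstContinuous_of_bounded hKmeas hM hKsupp
  obtain rfl : Kstar = jackknifeKernel K := funext hKstar
  have hmom := integral_pow_mul_jackknifeKernel hK
  have hsqrt : Real.sqrt 2 ^ 2 = 2 := Real.sq_sqrt zero_le_two
  have hm0 : ∫ z, jackknifeKernel K z = 1 := by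
    have := hmom 0
    norm_num [hKint] at this
    exact this
  have hm1 : ∫ z, z * jackknifeKernel K z = 0 := by simpa [hK1] using hmom 1
  have hm2 : ∫ z, z ^ 2 * jackknifeKernel K z = 0 := by rw [hmom 2, hsqrt, sub_self, zero_mul]
  have hm3 : ∫ z, z ^ 3 * jackknifeKernel K z = 0 := by rw [hmom 3, hK3, mul_zero]
  have hmoments : ∀ k ∈ Finset.Icc 1 3, ∫ z, z ^ k * jackknifeKernel K z = 0 := by
    intro k hk
    obtain rfl | rfl | rfl : k = 1 ∨ k = 2 ∨ k = 3 := by rw [Finset.mem_Icc] at hk; omega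
    exacts [by simpa using hm1, hm2, hm3]
  refine ⟨hm0, hm1, hm2, hm3, Mg / 24 * ∫ z, |z ^ 4 * jackknifeKernel K z|,
    Eventually.of_forall fun n => ?_⟩
  rw [integral_mul_comp_sub_div g _ x (hpos n)]
  calc _ ≤ _ :=
        abs_integral_comp_sub_mul_sub_le hK.jackknifeKernel hm0 hmoments hg (hMg 4 le_rfl) x (h n)
    _ = _ := by
        rw [abs_of_pos (hpos n)]
        norm_num [Nat.factorial]
        ring

theorem stmt_3 (K g : ℝ → ℝ) (A c_K : ℝ)
    (hKmeas : Measurable K) (hKbd : ∃ M, ∀ z, |K z| ≤ M)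
    (hKsymm : ∀ z, K (-z) = K z)
    (hKsupp : ∀ z, z ∉ Set.Icc (-A) A → K z = 0)
    (hKint : ∫ z, K z = 1)
    (hK1 : ∫ z, z * K z = 0)
    (hK2 : ∫ z, z^2 * K z = c_K) (hcK : c_K ≠ 0)
    (hK3 : ∫ z, z^3 * K z = 0)
    (Kstar : ℝ → ℝ)
    (hKstar : ∀ z, Kstar z = 2 * K z - (1 / Real.sqrt 2) * K (z / Real.sqrt 2))
    (hg : ContDiff ℝ 4 g)
    (hgbd : ∃ M, ∀ k ≤ 4, ∀ y, |iteratedDeriv k g y| ≤ M)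
    (x : ℝ) (h : ℕ → ℝ) (hpos : ∀ n, 0 < h n) (h0 : Tendsto h atTop (nhds 0)) :
    (∫ z, Kstar z = 1) ∧ (∫ z, z * Kstar z = 0) ∧
    (∫ z, z^2 * Kstar z = 0) ∧ (∫ z, z^3 * Kstar z = 0) ∧
    ∃ C, ∀ᶠ n in atTop,
      |(1 / h n) * (∫ y, g y * Kstar ((x - y) / h n)) - g x| ≤ C * (h n)^4 :=
  stmt_3_general K g A hKmeas hKbd hKsupp hKint hK1 hK3 Kstar hKstar hg hgbd x h hpos
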